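/- arXiv:1509.00703 — 2 statements merged into one kernel-verified Lean document; each statement's English description precedes it below -/
import Mathlib

section
/- With the setup of the affine-curvature relation κ = λu + α along an elastica: define θ_u by cos θ_u = (λ₂ cos θ − λ₁ sin θ)/λ and sin θ_u = (λ₁ cos θ + λ₂ sin θ)/λ. Then du/ds = cos θ_u, and there is a constant β such that sin θ_u(s) = (1/2)λ u(s)² + α u(s) + β for all s. In other words, sin θ_u is a quadratic polynomial in u along the curve. -/
open Real

/-
Differentiating `u = (λ₂ x − λ₁ y)/λ` gives `u' = cos θ_u`, and differentiating
`sin θ_u = (λ₁ cos θ + λ₂ sin θ)/λ` gives `κ cos θ_u = (λu + α) u'`, which is the derivative of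
`λu²/2 + αu`. So `sin θ_u − λu²/2 − αu` has zero derivative on `ℝ` and is constant.
-/

theorem hasDerivAt_cos_mul_add_sin_mul {θ : ℝ → ℝ} {κ s : ℝ} (hθ : HasDerivAt θ κ s) (a b : ℝ) :
    HasDerivAt (fun t => a * cos (θ t) + b * sin (θ t))
      ((b * cos (θ s) - a * sin (θ s)) * κ) s := by
  have hcos := (hasDerivAt_cos (θ s)).comp s hθ
  have hsin := (hasDerivAt_sin (θ s)).comp s hθ
  exact ((hcos.const_mul a).add (hsin.const_mul b)).congr_deriv (by ring)

theorem hasDerivAt_half_mul_sq_add_mul {u : ℝ → ℝ} {c s : ℝ} (hu : HasDerivAt u c s) (a b : ℝ) :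
    HasDerivAt (fun t => 1 / 2 * a * u t ^ 2 + b * u t) ((a * u s + b) * c) s := by
  have hsq : HasDerivAt (fun t => u t ^ 2) (2 * u s * c) s := by simpa using hu.fun_pow 2
  exact ((hsq.const_mul (1 / 2 * a)).add (hu.const_mul b)).congr_deriv (by ring)

theorem exists_eq_add_const_of_hasDerivAt {f g f' : ℝ → ℝ}
    (hf : ∀ s, HasDerivAt f (f' s) s) (hg : ∀ s, HasDerivAt g (f' s) s) :
    ∃ β, ∀ s, f s = g s + β := by
  obtain ⟨β, hβ⟩ := isOpen_univ.exists_eq_add_of_deriv_eq isPreconnected_univ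
    (fun s _ => (hf s).differentiableAt.differentiableWithinAt)
    (fun s _ => (hg s).differentiableAt.differentiableWithinAt)
    (fun s _ => (hf s).deriv.trans (hg s).deriv.symm)
  exact ⟨β, fun s => hβ (Set.mem_univ s)⟩

theorem sin_theta_u_quadratic_general
    (x y θ : ℝ → ℝ) (lam1 lam2 : ℝ)
    (hx : ContDiff ℝ 3 x) (hy : ContDiff ℝ 3 y) (hθ : ContDiff ℝ 2 θ)
    (hx' : ∀ s, deriv x s = Real.cos (θ s))
    (hy' : ∀ s, deriv y s = Real.sin (θ s))
    (lam : ℝ)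
    (u : ℝ → ℝ) (hu : ∀ s, u s = (lam2 * x s - lam1 * y s) / lam)
    (α : ℝ) (hκ : ∀ s, deriv θ s = lam * u s + α)
    (cosθu sinθu : ℝ → ℝ)
    (hcos : ∀ s, cosθu s = (lam2 * Real.cos (θ s) - lam1 * Real.sin (θ s)) / lam)
    (hsin : ∀ s, sinθu s = (lam1 * Real.cos (θ s) + lam2 * Real.sin (θ s)) / lam) :
    (∀ s, deriv u s = cosθu s) ∧
    (∃ β : ℝ, ∀ s, sinθu s = (1/2) * lam * (u s)^2 + α * u s + β) := by
  have hθ' : ∀ s, HasDerivAt θ (lam * u s + α) s := fun s =>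
    hκ s ▸ (hθ.differentiable (by norm_num) s).hasDerivAt
  have hu' : ∀ s, HasDerivAt u (cosθu s) s := by
    intro s
    have hxs := hx' s ▸ (hx.differentiable (by norm_num) s).hasDerivAt
    have hys := hy' s ▸ (hy.differentiable (by norm_num) s).hasDerivAt
    rw [funext hu, hcos]
    exact ((hxs.const_mul lam2).sub (hys.const_mul lam1)).div_const lam
  have hsinθu' : ∀ s, HasDerivAt sinθu ((lam * u s + α) * cosθu s) s := by
    intro s
    rw [funext hsin, hcos]
    exact ((hasDerivAt_cos_mul_add_sin_mul (hθ' s) lam1 lam2).div_const lam).congr_deriv (by ring)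
  refine ⟨fun s => (hu' s).deriv, ?_⟩
  simpa using exists_eq_add_const_of_hasDerivAt hsinθu' fun s => hasDerivAt_half_mul_sq_add_mul (hu' s) lam α

/-- Along an elastica, `du/ds = cos θ_u` and `sin θ_u` is a quadratic polynomial in `u`. -/
theorem sin_theta_u_quadratic
    (x y θ : ℝ → ℝ) (lam1 lam2 : ℝ)
    (hx : ContDiff ℝ 3 x) (hy : ContDiff ℝ 3 y) (hθ : ContDiff ℝ 2 θ)
    (hx' : ∀ s, deriv x s = Real.cos (θ s))
    (hy' : ∀ s, deriv y s = Real.sin (θ s))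
    (hEL : ∀ s, deriv (deriv θ) s + lam1 * Real.sin (θ s) - lam2 * Real.cos (θ s) = 0)
    (lam : ℝ) (hlam : lam = Real.sqrt (lam1^2 + lam2^2)) (hlampos : 0 < lam)
    (u : ℝ → ℝ) (hu : ∀ s, u s = (lam2 * x s - lam1 * y s) / lam)
    (α : ℝ) (hκ : ∀ s, deriv θ s = lam * u s + α)
    (cosθu sinθu : ℝ → ℝ)
    (hcos : ∀ s, cosθu s = (lam2 * Real.cos (θ s) - lam1 * Real.sin (θ s)) / lam)
    (hsin : ∀ s, sinθu s = (lam1 * Real.cos (θ s) + lam2 * Real.sin (θ s)) / lam) :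
    (∀ s, deriv u s = cosθu s) ∧
    (∃ β : ℝ, ∀ s, sinθu s = (1/2) * lam * (u s)^2 + α * u s + β) :=
  sin_theta_u_quadratic_general x y θ lam1 lam2 hx hy hθ hx' hy' lam u hu α hκ cosθu sinθu hcos hsin
end

section
/- Let k ∈ (0,1) and define ζ_k(s) = (2E(s,k) − s, 2k(1 − cn(s,k))), where E(s,k) = ∫₀^s dn²(u,k) du. Then the tangent angle θ(s) of ζ_k, defined by ζ_k'(s) = (cos θ(s), sin θ(s)) with θ(0) = 0, satisfies θ''(s) = −sin θ(s) and θ'(0) = 2k. In particular ζ_k is parameterized by arclength: ‖ζ_k'(s)‖ = 1 for all s. -/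
/-!
Along the curve, `cos θ = 2 dn² - 1` and `sin θ = 2k sn dn`. Differentiating both and using
`cos² θ + sin² θ = 1` recovers `θ' = cos θ · (sin θ)' - sin θ · (cos θ)'`, which the Jacobi
identity `dn² + k² sn² = 1` simplifies to `θ' = 2k cn`. Differentiating once more gives
`θ'' = -2k sn dn = -sin θ`.
-/

open Real intervalIntegral

theorem hasDerivAt_of_hasDerivAt_cos_sin {θ : ℝ → ℝ} {s c' s' : ℝ}
    (hθ : DifferentiableAt ℝ θ s)
    (hcos : HasDerivAt (fun u => cos (θ u)) c' s) (hsin : HasDerivAt (fun u => sin (θ u)) s' s) :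
    HasDerivAt θ (cos (θ s) * s' - sin (θ s) * c') s := by
  have hc : -sin (θ s) * deriv θ s = c' := hθ.hasDerivAt.cos.unique hcos
  have hs : cos (θ s) * deriv θ s = s' := hθ.hasDerivAt.sin.unique hsin
  refine hθ.hasDerivAt.congr_deriv ?_
  linear_combination cos (θ s) * hs - sin (θ s) * hc - deriv θ s * Real.sin_sq_add_cos_sq (θ s)

section Jacobi

variable {k : ℝ} {sn cn dn : ℝ → ℝ}
  (hsn : ∀ u, HasDerivAt sn (cn u * dn u) u)
  (hdn : ∀ u, HasDerivAt dn (-(k ^ 2 * (sn u * cn u))) u)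

include hsn hdn

theorem sq_dn_add_sq_mul_sq_sn (hsn0 : sn 0 = 0) (hdn0 : dn 0 = 1) (s : ℝ) :
    dn s ^ 2 + k ^ 2 * sn s ^ 2 = 1 := by
  have hderiv : ∀ u, HasDerivAt (fun u => dn u ^ 2 + k ^ 2 * sn u ^ 2) 0 u := fun u => by
    refine (((hdn u).pow 2).add (((hsn u).pow 2).const_mul (k ^ 2))).congr_deriv ?_
    ring
  have hconst := is_const_of_deriv_eq_zero (fun u => (hderiv u).differentiableAt)
    (fun u => (hderiv u).deriv) s 0
  simpa [hsn0, hdn0] using hconst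

theorem hasDerivAt_of_cos_eq_of_sin_eq (hsn0 : sn 0 = 0) (hdn0 : dn 0 = 1) {θ : ℝ → ℝ}
    (hθ : Differentiable ℝ θ) (hcos : ∀ u, cos (θ u) = 2 * dn u ^ 2 - 1)
    (hsin : ∀ u, sin (θ u) = 2 * k * (sn u * dn u)) (s : ℝ) :
    HasDerivAt θ (2 * k * cn s) s := by
  have hcos' : HasDerivAt (fun u => cos (θ u)) (2 * (2 * dn s * -(k ^ 2 * (sn s * cn s)))) s := by
    simp only [hcos]
    exact ((((hdn s).pow 2).const_mul 2).sub_const 1).congr_deriv (by ring)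
  have hsin' : HasDerivAt (fun u => sin (θ u))
      (2 * k * (cn s * dn s * dn s + sn s * -(k ^ 2 * (sn s * cn s)))) s := by
    simp only [hsin]
    exact ((hsn s).mul (hdn s)).const_mul (2 * k)
  refine (hasDerivAt_of_hasDerivAt_cos_sin (hθ s) hcos' hsin').congr_deriv ?_
  rw [hcos, hsin]
  linear_combination
    (2 * k * cn s * (2 * dn s ^ 2 + 1)) * sq_dn_add_sq_mul_sq_sn hsn hdn hsn0 hdn0 s

end Jacobi

theorem basic_elastica_pendulum_general
    (k : ℝ)
    (sn cn dn : ℝ → ℝ)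
    (hsn : ∀ u, HasDerivAt sn (cn u * dn u) u)
    (hcn : ∀ u, HasDerivAt cn (-(sn u * dn u)) u)
    (hdn : ∀ u, HasDerivAt dn (-(k^2 * (sn u * cn u))) u)
    (hsn0 : sn 0 = 0) (hcn0 : cn 0 = 1) (hdn0 : dn 0 = 1)
    (E ζ₁ ζ₂ : ℝ → ℝ)
    (hE : ∀ s, E s = ∫ u in (0:ℝ)..s, (dn u)^2)
    (hζ₁ : ∀ s, ζ₁ s = 2 * E s - s)
    (hζ₂ : ∀ s, ζ₂ s = 2 * k * (1 - cn s))
    (θ : ℝ → ℝ) (hθ : ContDiff ℝ 2 θ)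
    (htan : ∀ s, deriv ζ₁ s = Real.cos (θ s) ∧ deriv ζ₂ s = Real.sin (θ s)) :
    (∀ s, deriv (deriv θ) s = - Real.sin (θ s)) ∧ deriv θ 0 = 2 * k ∧
      (∀ s, (deriv ζ₁ s)^2 + (deriv ζ₂ s)^2 = 1) := by
  have hdn_cont : Continuous dn := continuous_iff_continuousAt.2 fun u => (hdn u).continuousAt
  have hcos (s : ℝ) : cos (θ s) = 2 * dn s ^ 2 - 1 := by
    rw [← (htan s).1, funext hζ₁, funext hE]
    have hE' := ((hdn_cont.pow 2).integral_hasStrictDerivAt 0 s).hasDerivAt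
    exact ((hE'.const_mul 2).sub (hasDerivAt_id s)).deriv
  have hsin (s : ℝ) : sin (θ s) = 2 * k * (sn s * dn s) := by
    rw [← (htan s).2, funext hζ₂]
    exact (((hcn s).const_sub 1).const_mul (2 * k)).deriv.trans (by ring)
  have hθ' : deriv θ = fun s => 2 * k * cn s := funext fun s =>
    (hasDerivAt_of_cos_eq_of_sin_eq hsn hdn hsn0 hdn0 (hθ.differentiable (by norm_num))
      hcos hsin s).deriv
  refine ⟨fun s => ?_, by simp only [hθ', hcn0, mul_one], fun s => ?_⟩
  · rw [hθ', ((hcn s).const_mul (2 * k)).deriv, hsin]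
    ring
  · rw [(htan s).1, (htan s).2, cos_sq_add_sin_sq]

/-- The tangent angle of the basic elastica `ζ_k` satisfies the pendulum equation,
with `θ'(0) = 2k`, and `ζ_k` is parameterized by arclength. -/
theorem basic_elastica_pendulum
    (k : ℝ) (hk : k ∈ Set.Ioo (0:ℝ) 1)
    (sn cn dn : ℝ → ℝ)
    (hsn : ∀ u, HasDerivAt sn (cn u * dn u) u)
    (hcn : ∀ u, HasDerivAt cn (-(sn u * dn u)) u)
    (hdn : ∀ u, HasDerivAt dn (-(k^2 * (sn u * cn u))) u)
    (hsn0 : sn 0 = 0) (hcn0 : cn 0 = 1) (hdn0 : dn 0 = 1)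
    (E ζ₁ ζ₂ : ℝ → ℝ)
    (hE : ∀ s, E s = ∫ u in (0:ℝ)..s, (dn u)^2)
    (hζ₁ : ∀ s, ζ₁ s = 2 * E s - s)
    (hζ₂ : ∀ s, ζ₂ s = 2 * k * (1 - cn s))
    (θ : ℝ → ℝ) (hθ : ContDiff ℝ 2 θ) (hθ0 : θ 0 = 0)
    (htan : ∀ s, deriv ζ₁ s = Real.cos (θ s) ∧ deriv ζ₂ s = Real.sin (θ s)) :
    (∀ s, deriv (deriv θ) s = - Real.sin (θ s)) ∧ deriv θ 0 = 2 * k ∧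
      (∀ s, (deriv ζ₁ s)^2 + (deriv ζ₂ s)^2 = 1) :=
  basic_elastica_pendulum_general k sn cn dn hsn hcn hdn hsn0 hcn0 hdn0 E ζ₁ ζ₂ hE hζ₁ hζ₂ θ hθ htan
end
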